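/- For each point pair (a, b) with ||a - b||_1 ≤ 1 in R^d, there exists exactly one sign vector e ∈ {-1,+1}^d such that the lifted point ā_e is contained in the rectangle b̄_e, provided no coordinate tie occurs (a_i ≠ b_i for all i). -/
import Mathlib


/-- `ā_e ∈ b̄_e`: the lifted point `ā_e = (a₁,…,a_d, ∑ eᵢaᵢ)` lies in the rectangle
`b̄_e = ∏ Iᵢ × (-∞, 1 + ∑ eᵢbᵢ]` where `Iᵢ = [bᵢ,∞)` if `eᵢ = 1` and `(-∞, bᵢ]` if `eᵢ = -1`. -/
def liftedMem {d : ℕ} (a b e : Fin d → ℝ) : Prop :=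
  (∀ i, (e i = 1 → b i ≤ a i) ∧ (e i = -1 → a i ≤ b i)) ∧
    (∑ i, e i * a i) ≤ 1 + ∑ i, e i * b i

/-- If `‖a - b‖₁ ≤ 1` and no coordinate tie occurs, there is exactly one sign vector
`e ∈ {-1,+1}^d` with `ā_e ∈ b̄_e`. -/
theorem stmt_3 {d : ℕ} (a b : Fin d → ℝ)
    (hne : ∀ i, a i ≠ b i) (hab : (∑ i, |a i - b i|) ≤ 1) :
    ∃! e : Fin d → ℝ, (∀ i, e i = 1 ∨ e i = -1) ∧ liftedMem a b e := by
  set e : Fin d → ℝ := fun i => if b i ≤ a i then 1 else -1 with he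
  refine ⟨e, ⟨fun i => by by_cases h : b i ≤ a i <;> simp [he, h], ?_, ?_⟩, ?_⟩
  · intro i
    by_cases h : b i ≤ a i
    · exact ⟨fun _ => h, fun hc => by norm_num [he, h] at hc⟩
    · exact ⟨fun hc => by norm_num [he, h] at hc, fun _ => le_of_not_ge h⟩
  · have key : (∑ i, e i * a i) - (∑ i, e i * b i) = ∑ i, |a i - b i| := by
      rw [← Finset.sum_sub_distrib]
      refine Finset.sum_congr rfl fun i _ => ?_
      by_cases h : b i ≤ a i
      · simp [he, h, abs_of_nonneg (sub_nonneg.2 h), mul_sub]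
      · rw [abs_of_nonpos (sub_nonpos.2 (le_of_not_ge h))]
        simp [he, h]; ring
    linarith
  · rintro e' ⟨hsgn, hmem, -⟩
    funext i
    rcases hsgn i with h1 | h1 <;> rw [h1, he]
    · simp [(hmem i).1 h1]
    · have := (hmem i).2 h1
      have : ¬ b i ≤ a i := fun hh => hne i (le_antisymm this hh)
      simp [this]
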